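/- Consider a finite-horizon tabular MDP with horizon H, transition kernels P_h, and true reward functions r_h : S×A → [0,1]. Let r̂_h : S×A → [0,1], Γ_h : S×A → [0,∞), and g_h : S×A → ℝ, and define backward recursively V̂_{H+1} ≡ 0, Q̂_h(s,a) = min{ max{ r̂_h(s,a) + g_h(s,a) − 2Γ_h(s,a), 0 }, H−h+1 }, and V̂_h(s) = max_{a∈A} Q̂_h(s,a). Define the model evaluation error ι_h(s,a) = (P_h V̂_{h+1})(s,a) + r_h(s,a) − Q̂_h(s,a). If |g_h(s,a) − (P_h V̂_{h+1})(s,a)| ≤ Γ_h(s,a) and |r̂_h(s,a) − r_h(s,a)| ≤ Γ_h(s,a) for all h ∈ [H] and (s,a) ∈ S×A, then 0 ≤ ι_h(s,a) ≤ 4Γ_h(s,a) for all h ∈ [H] and (s,a) ∈ S×A. -/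
import Mathlib


variable {S A : Type*}

/-- The pessimistic Q-function
`Q̂_h(s,a) = min{max{r̂_h(s,a) + g_h(s,a) − 2Γ_h(s,a), 0}, H−h+1}`. -/
noncomputable def Qhat (rhat g Γ : ℕ → S → A → ℝ) (H h : ℕ) (s : S) (a : A) : ℝ :=
  min (max (rhat h s a + g h s a - 2 * Γ h s a) 0) ((H - h + 1 : ℕ) : ℝ)

/-- `V̂_h(s) = max_{a∈A} Q̂_h(s,a)` for `h ∈ [H]`, and `V̂_{H+1} ≡ 0`. -/
noncomputable def Vhat (rhat g Γ : ℕ → S → A → ℝ) (H h : ℕ) (s : S) : ℝ :=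
  if h ≤ H then ⨆ a : A, Qhat rhat g Γ H h s a else 0

/-- The model evaluation error `ι_h(s,a) = (P_h V̂_{h+1})(s,a) + r_h(s,a) − Q̂_h(s,a)`. -/
noncomputable def evalErr [Fintype S] (P : ℕ → S → A → S → ℝ) (r rhat g Γ : ℕ → S → A → ℝ)
    (H h : ℕ) (s : S) (a : A) : ℝ :=
  (∑ s', P h s a s' * Vhat rhat g Γ H (h + 1) s') + r h s a - Qhat rhat g Γ H h s a

lemma Qhat_nonneg (rhat g Γ : ℕ → S → A → ℝ) (H h : ℕ) (s : S) (a : A) :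
    0 ≤ Qhat rhat g Γ H h s a :=
  le_min (le_max_right _ _) (Nat.cast_nonneg _)

lemma Vhat_bounds [Fintype A] [Nonempty A] (rhat g Γ : ℕ → S → A → ℝ) (H h : ℕ) (s : S) :
    0 ≤ Vhat rhat g Γ H h s ∧ Vhat rhat g Γ H h s ≤ ((H + 1 - h : ℕ) : ℝ) := by
  unfold Vhat
  split_ifs with hh
  · constructor
    · exact le_ciSup_of_le (Set.Finite.bddAbove (Set.finite_range _)) (Classical.arbitrary A)
        (Qhat_nonneg rhat g Γ H h s _)
    · refine ciSup_le fun a => (min_le_right _ _).trans ?_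
      have : H - h + 1 = H + 1 - h := by omega
      rw [this]
  · exact ⟨le_refl 0, Nat.cast_nonneg _⟩

/-- if `|g_h(s,a) − (P_h V̂_{h+1})(s,a)| ≤ Γ_h(s,a)` and
`|r̂_h(s,a) − r_h(s,a)| ≤ Γ_h(s,a)` everywhere, then
`0 ≤ ι_h(s,a) ≤ 4Γ_h(s,a)` for all `h ∈ [H]` and `(s,a)`. -/
theorem stmt14 [Fintype S] [Fintype A] [Nonempty A]
    (H : ℕ) (P : ℕ → S → A → S → ℝ)
    (hP0 : ∀ h s a s', 0 ≤ P h s a s') (hP1 : ∀ h s a, ∑ s', P h s a s' = 1)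
    (r : ℕ → S → A → ℝ) (hr : ∀ h s a, r h s a ∈ Set.Icc (0 : ℝ) 1)
    (rhat : ℕ → S → A → ℝ) (hrhat : ∀ h s a, rhat h s a ∈ Set.Icc (0 : ℝ) 1)
    (Γ : ℕ → S → A → ℝ) (hΓ : ∀ h s a, 0 ≤ Γ h s a)
    (g : ℕ → S → A → ℝ)
    (hg : ∀ h ∈ Finset.Icc 1 H, ∀ (s : S) (a : A),
      |g h s a - ∑ s', P h s a s' * Vhat rhat g Γ H (h + 1) s'| ≤ Γ h s a)
    (hrerr : ∀ h ∈ Finset.Icc 1 H, ∀ (s : S) (a : A), |rhat h s a - r h s a| ≤ Γ h s a) :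
    ∀ h ∈ Finset.Icc 1 H, ∀ (s : S) (a : A),
      0 ≤ evalErr P r rhat g Γ H h s a ∧ evalErr P r rhat g Γ H h s a ≤ 4 * Γ h s a := by
  intro h hh s a
  obtain ⟨h1, h2⟩ := Finset.mem_Icc.mp hh
  set PV := ∑ s', P h s a s' * Vhat rhat g Γ H (h + 1) s' with hPV
  have hPV0 : 0 ≤ PV :=
    Finset.sum_nonneg fun s' _ =>
      mul_nonneg (hP0 _ _ _ _) (Vhat_bounds rhat g Γ H (h + 1) s').1
  have hPVle : PV ≤ ((H - h : ℕ) : ℝ) := by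
    have : PV ≤ ∑ s' : S, P h s a s' * ((H + 1 - (h + 1) : ℕ) : ℝ) :=
      Finset.sum_le_sum fun s' _ =>
        mul_le_mul_of_nonneg_left (Vhat_bounds rhat g Γ H (h + 1) s').2 (hP0 _ _ _ _)
    rw [← Finset.sum_mul, hP1, one_mul] at this
    have he : H + 1 - (h + 1) = H - h := by omega
    rwa [he] at this
  have hgb := abs_le.mp (hg h hh s a)
  have hrb := abs_le.mp (hrerr h hh s a)
  have hr0 := (hr h s a).1
  have hr1 := (hr h s a).2
  have hΓ0 := hΓ h s a
  have hcast : ((H - h + 1 : ℕ) : ℝ) = ((H - h : ℕ) : ℝ) + 1 := by push_cast; ring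
  have hQle : Qhat rhat g Γ H h s a ≤ PV + r h s a := by
    refine (min_le_left _ _).trans (max_le (by simp only [← hPV] at hgb ⊢; linarith) (by linarith))
  have hQge : PV + r h s a - 4 * Γ h s a ≤ Qhat rhat g Γ H h s a := by
    refine le_min (le_trans ?_ (le_max_left _ _)) ?_
    · simp only [← hPV] at hgb ⊢; linarith
    · rw [hcast]; linarith
  unfold evalErr
  rw [← hPV]
  constructor <;> linarith
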